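/- arXiv:2112.13457 — 6 statements merged into one kernel-verified Lean document; each statement's English description precedes it below -/
import Mathlib

section
/- Any Novikov algebra satisfies the identity (xy, z, t) = (x,z,t)y. -/
theorem stmt5_general {N : Type*} [NonUnitalNonAssocRing N]
    (hrc : ∀ x y z : N, (x*y)*z = (x*z)*y)
    (x y z t : N) :
    ((x*y)*z)*t - (x*y)*(z*t) = (((x*z)*t) - x*(z*t))*y := by
  calc ((x*y)*z)*t - (x*y)*(z*t) = ((x*z)*t)*y - (x*(z*t))*y := by
        rw [hrc x y z, hrc (x*z) y t, hrc x y (z*t)]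
    _ = (((x*z)*t) - x*(z*t))*y := (sub_mul _ _ _).symm

theorem stmt5 {K N : Type*} [Field K] [NonUnitalNonAssocRing N] [Module K N]
    [SMulCommClass K N N] [IsScalarTower K N N]
    (hls : ∀ x y z : N, (x*y)*z - x*(y*z) = (y*x)*z - y*(x*z))
    (hrc : ∀ x y z : N, (x*y)*z = (x*z)*y)
    (x y z t : N) :
    ((x*y)*z)*t - (x*y)*(z*t) = (((x*z)*t) - x*(z*t))*y :=
  stmt5_general hrc x y z t
end

section
/- Any Novikov algebra satisfies the identity (x, yz, t) = (x,y,t)z. -/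
theorem stmt6_general {N : Type*} [NonUnitalNonAssocRing N]
    (hls : ∀ x y z : N, (x*y)*z - x*(y*z) = (y*x)*z - y*(x*z))
    (hrc : ∀ x y z : N, (x*y)*z = (x*z)*y)
    (x y z t : N) :
    (x*(y*z))*t - x*((y*z)*t) = ((x*y)*t - x*(y*t))*z := by
  calc (x*(y*z))*t - x*((y*z)*t)
      = ((y*z)*x)*t - (y*z)*(x*t) := hls x (y*z) t
    _ = ((y*x)*t - y*(x*t))*z := by rw [hrc y z x, hrc (y*x) z t, hrc y z (x*t), sub_mul]
    _ = ((x*y)*t - x*(y*t))*z := by rw [hls x y t]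

theorem stmt6 {K N : Type*} [Field K] [NonUnitalNonAssocRing N] [Module K N]
    [SMulCommClass K N N] [IsScalarTower K N N]
    (hls : ∀ x y z : N, (x*y)*z - x*(y*z) = (y*x)*z - y*(x*z))
    (hrc : ∀ x y z : N, (x*y)*z = (x*z)*y)
    (x y z t : N) :
    (x*(y*z))*t - x*((y*z)*t) = ((x*y)*t - x*(y*t))*z :=
  stmt6_general hls hrc x y z t
end

section
/- In any Novikov algebra N, the linear span of all associators (N,N,N) is a two-sided ideal of N. -/
/-! Right-commutativity `(xy)z = (xz)y` turns a right multiple of an associator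
into an associator, `(x, y, z) n = (xn, y, z)`, and then the associator cocycle identity expresses
`n (x, y, z)` as a combination of four associators. -/

section RightCommutative

variable {N : Type*} [NonUnitalNonAssocRing N]

theorem associator_mul_of_right_comm (hrc : ∀ x y z : N, x * y * z = x * z * y) (x y z n : N) :
    associator x y z * n = associator (x * n) y z := by
  rw [associator_apply, associator_apply, sub_mul, hrc (x * y) z n, hrc x y n, hrc x (y * z) n]

theorem mul_associator_of_right_comm (hrc : ∀ x y z : N, x * y * z = x * z * y) (n x y z : N) :
    n * associator x y z = associator (n * x) y z - associator n (x * y) z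
      + associator n x (y * z) - associator (n * z) x y := by
  rw [← associator_mul_of_right_comm hrc n x y z, ← sub_eq_zero, ← associator_cocycle n x y z]
  abel

end RightCommutative

section AssociatorSpan

variable (K N : Type*) [Ring K] [NonUnitalNonAssocRing N] [Module K N]

def associatorSpan : Submodule K N :=
  Submodule.span K {w : N | ∃ u v t : N, w = associator u v t}

variable {K N}

namespace associatorSpan

theorem associator_mem (x y z : N) : associator x y z ∈ associatorSpan K N :=
  Submodule.subset_span ⟨x, y, z, rfl⟩

theorem mul_mem_left [SMulCommClass K N N] (hrc : ∀ x y z : N, x * y * z = x * z * y)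
    {a : N} (ha : a ∈ associatorSpan K N) (n : N) : n * a ∈ associatorSpan K N := by
  have hle : associatorSpan K N ≤ (associatorSpan K N).comap (LinearMap.mulLeft K n) := by
    refine Submodule.span_le.mpr ?_
    rintro _ ⟨x, y, z, rfl⟩
    simp only [SetLike.mem_coe, Submodule.mem_comap, LinearMap.mulLeft_apply,
      mul_associator_of_right_comm hrc]
    exact sub_mem
      (add_mem (sub_mem (associator_mem _ _ _) (associator_mem _ _ _)) (associator_mem _ _ _))
      (associator_mem _ _ _)
  exact hle ha

theorem mul_mem_right [IsScalarTower K N N] (hrc : ∀ x y z : N, x * y * z = x * z * y)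
    {a : N} (ha : a ∈ associatorSpan K N) (n : N) : a * n ∈ associatorSpan K N := by
  have hle : associatorSpan K N ≤ (associatorSpan K N).comap (LinearMap.mulRight K n) := by
    refine Submodule.span_le.mpr ?_
    rintro _ ⟨x, y, z, rfl⟩
    simp only [SetLike.mem_coe, Submodule.mem_comap, LinearMap.mulRight_apply,
      associator_mul_of_right_comm hrc]
    exact associator_mem _ _ _
  exact hle ha

end associatorSpan

end AssociatorSpan

theorem stmt8_general {K N : Type*} [Field K] [NonUnitalNonAssocRing N] [Module K N]
    [SMulCommClass K N N] [IsScalarTower K N N]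
    (hrc : ∀ x y z : N, (x*y)*z = (x*z)*y) :
    ∀ a ∈ Submodule.span K {w : N | ∃ u v t : N, w = (u*v)*t - u*(v*t)}, ∀ n : N,
      n * a ∈ Submodule.span K {w : N | ∃ u v t : N, w = (u*v)*t - u*(v*t)} ∧
      a * n ∈ Submodule.span K {w : N | ∃ u v t : N, w = (u*v)*t - u*(v*t)} :=
  fun _ ha n => ⟨associatorSpan.mul_mem_left hrc ha n, associatorSpan.mul_mem_right hrc ha n⟩

theorem stmt8 {K N : Type*} [Field K] [NonUnitalNonAssocRing N] [Module K N]
    [SMulCommClass K N N] [IsScalarTower K N N]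
    (hls : ∀ x y z : N, (x*y)*z - x*(y*z) = (y*x)*z - y*(x*z))
    (hrc : ∀ x y z : N, (x*y)*z = (x*z)*y) :
    ∀ a ∈ Submodule.span K {w : N | ∃ u v t : N, w = (u*v)*t - u*(v*t)}, ∀ n : N,
      n * a ∈ Submodule.span K {w : N | ∃ u v t : N, w = (u*v)*t - u*(v*t)} ∧
      a * n ∈ Submodule.span K {w : N | ∃ u v t : N, w = (u*v)*t - u*(v*t)} :=
  stmt8_general hrc
end

section
/- Any Novikov algebra over a field of characteristic not equal to 2 satisfies the identity 2·x[a,b] = 2[[x,a],b] + 2[a,[x,b]] + [ax,b] + [a,bx]. -/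
/-!
Left symmetry alone gives `[a,b]x = a(bx) - b(ax)`; combined with right commutativity it gives
`x[a,b] = a(xb) - b(xa) - [a,b]x`. Right commutativity and the first formula turn the right-hand side
into `2(a(xb) - b(xa)) - 2[a,b]x`, which is `2x[a,b]` by the second formula.
-/

section LeftSymmetric

variable {N : Type*} [NonUnitalNonAssocRing N]

theorem lie_mul_eq_of_leftSymmetric
    (hls : ∀ x y z : N, (x*y)*z - x*(y*z) = (y*x)*z - y*(x*z)) (a b x : N) :
    ⁅a, b⁆ * x = a * (b * x) - b * (a * x) := by
  have h := hls a b x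
  rw [Ring.lie_def, sub_mul]
  linear_combination (norm := abel1) h

theorem mul_lie_eq_of_novikov
    (hls : ∀ x y z : N, (x*y)*z - x*(y*z) = (y*x)*z - y*(x*z))
    (hrc : ∀ x y z : N, (x*y)*z = (x*z)*y) (x a b : N) :
    x * ⁅a, b⁆ = a * (x * b) - b * (x * a) - ⁅a, b⁆ * x := by
  have hxab := hls x a b
  have hxba := hls x b a
  rw [Ring.lie_def, mul_sub, sub_mul, hrc a b x, hrc b a x]
  linear_combination (norm := abel1) hxba - hxab + hrc x a b

end LeftSymmetric

theorem stmt11_general {N : Type*} [NonUnitalNonAssocRing N]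
    (hls : ∀ x y z : N, (x*y)*z - x*(y*z) = (y*x)*z - y*(x*z))
    (hrc : ∀ x y z : N, (x*y)*z = (x*z)*y)
    (x a b : N) :
    2 • (x*(a*b - b*a)) =
      2 • ((x*a - a*x)*b - b*(x*a - a*x)) + 2 • (a*(x*b - b*x) - (x*b - b*x)*a)
        + ((a*x)*b - b*(a*x)) + (a*(b*x) - (b*x)*a) := by
  have hmul_lie := mul_lie_eq_of_novikov hls hrc x a b
  have hlie_mul := lie_mul_eq_of_leftSymmetric hls a b x
  rw [Ring.lie_def] at hmul_lie hlie_mul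
  simp only [mul_sub, sub_mul, smul_sub, hrc a x b, hrc b x a, hrc x a b] at hmul_lie hlie_mul ⊢
  linear_combination (norm := abel1) 2 • hmul_lie - hlie_mul

theorem stmt11 {K N : Type*} [Field K] [NonUnitalNonAssocRing N] [Module K N]
    [SMulCommClass K N N] [IsScalarTower K N N]
    (hchar : (2 : K) ≠ 0)
    (hls : ∀ x y z : N, (x*y)*z - x*(y*z) = (y*x)*z - y*(x*z))
    (hrc : ∀ x y z : N, (x*y)*z = (x*z)*y)
    (x a b : N) :
    2 • (x*(a*b - b*a)) =
      2 • ((x*a - a*x)*b - b*(x*a - a*x)) + 2 • (a*(x*b - b*x) - (x*b - b*x)*a)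
        + ((a*x)*b - b*(a*x)) + (a*(b*x) - (b*x)*a) :=
  stmt11_general hls hrc x a b
end

section
/- Let N be a Novikov algebra over a field of characteristic not 2. If I and J are two-sided ideals of N, then the linear span of [I,J] = span{[a,b] : a in I, b in J} is a two-sided ideal of N. In particular, the commutator space [N,N] is an ideal of N. -/
/-- The span of commutators `[I, J]` of two submodules. -/
def commSpan (K : Type*) {N : Type*} [Field K] [NonUnitalNonAssocRing N] [Module K N]
    (I J : Submodule K N) : Submodule K N :=
  Submodule.span K {w : N | ∃ a ∈ I, ∃ b ∈ J, w = a * b - b * a}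

/-!
Right commutativity turns `[a, b] n` into `(a n) b - (b n) a`, and left symmetry then gives
`2 [a, b] n = [a, b n] + [a n, b]`; dividing by `2` puts `[a, b] n` into the span of `[I, J]`.
Left symmetry at `(n, a, b)` and `(n, b, a)`, with right commutativity, gives
`n [a, b] = [n a, b] + [a, n b] - [a, b] n`, so `n [a, b]` lies there as well.
-/

section NovikovIdentities

variable {N : Type*} [NonUnitalNonAssocRing N]

theorem two_nsmul_commutator_mul
    (hls : ∀ x y z : N, (x * y) * z - x * (y * z) = (y * x) * z - y * (x * z))
    (hrc : ∀ x y z : N, (x * y) * z = (x * z) * y) (a b n : N) :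
    2 • ((a * b - b * a) * n) = (a * (b * n) - (b * n) * a) + ((a * n) * b - b * (a * n)) := by
  rw [sub_mul]
  linear_combination (norm := abel) hls a b n + hrc a b n - hrc b a n

theorem mul_commutator_eq
    (hls : ∀ x y z : N, (x * y) * z - x * (y * z) = (y * x) * z - y * (x * z))
    (hrc : ∀ x y z : N, (x * y) * z = (x * z) * y) (a b n : N) :
    n * (a * b - b * a) =
      ((n * a) * b - b * (n * a)) + (a * (n * b) - (n * b) * a) - (a * b - b * a) * n := by
  rw [mul_sub, sub_mul]
  linear_combination (norm := abel) hls n b a - hls n a b + hrc a b n - hrc b a n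

end NovikovIdentities

section CommSpan

variable {K N : Type*} [Field K] [NonUnitalNonAssocRing N] [Module K N] {I J : Submodule K N}

theorem commutator_mem_commSpan {a b : N} (ha : a ∈ I) (hb : b ∈ J) :
    a * b - b * a ∈ commSpan K I J :=
  Submodule.subset_span ⟨a, ha, b, hb, rfl⟩

theorem commSpan_le_comap {S : Submodule K N} (f : N →ₗ[K] N)
    (h : ∀ a ∈ I, ∀ b ∈ J, f (a * b - b * a) ∈ S) : commSpan K I J ≤ S.comap f :=
  Submodule.span_le.mpr fun _ ⟨a, ha, b, hb, hw⟩ => hw ▸ h a ha b hb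

theorem commutator_mul_mem_commSpan (hchar : (2 : K) ≠ 0)
    (hls : ∀ x y z : N, (x * y) * z - x * (y * z) = (y * x) * z - y * (x * z))
    (hrc : ∀ x y z : N, (x * y) * z = (x * z) * y) {a b n : N}
    (ha : a ∈ I) (hb : b ∈ J) (han : a * n ∈ I) (hbn : b * n ∈ J) :
    (a * b - b * a) * n ∈ commSpan K I J := by
  rw [← Submodule.smul_mem_iff _ hchar, ofNat_smul_eq_nsmul, two_nsmul_commutator_mul hls hrc]
  exact add_mem (commutator_mem_commSpan ha hbn) (commutator_mem_commSpan han hb)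

theorem mul_commutator_mem_commSpan (hchar : (2 : K) ≠ 0)
    (hls : ∀ x y z : N, (x * y) * z - x * (y * z) = (y * x) * z - y * (x * z))
    (hrc : ∀ x y z : N, (x * y) * z = (x * z) * y) {a b n : N}
    (ha : a ∈ I) (hb : b ∈ J) (hna : n * a ∈ I) (hnb : n * b ∈ J)
    (han : a * n ∈ I) (hbn : b * n ∈ J) :
    n * (a * b - b * a) ∈ commSpan K I J := by
  rw [mul_commutator_eq hls hrc]
  exact sub_mem (add_mem (commutator_mem_commSpan hna hb) (commutator_mem_commSpan ha hnb))
    (commutator_mul_mem_commSpan hchar hls hrc ha hb han hbn)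

theorem mul_mem_commSpan [SMulCommClass K N N] [IsScalarTower K N N] (hchar : (2 : K) ≠ 0)
    (hls : ∀ x y z : N, (x * y) * z - x * (y * z) = (y * x) * z - y * (x * z))
    (hrc : ∀ x y z : N, (x * y) * z = (x * z) * y)
    (hI : ∀ n : N, ∀ a ∈ I, n * a ∈ I ∧ a * n ∈ I)
    (hJ : ∀ n : N, ∀ b ∈ J, n * b ∈ J ∧ b * n ∈ J) :
    ∀ c ∈ commSpan K I J, ∀ n : N, n * c ∈ commSpan K I J ∧ c * n ∈ commSpan K I J := by
  intro c hc n
  constructor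
  · refine commSpan_le_comap (S := commSpan K I J) (LinearMap.mulLeft K n)
      (fun a ha b hb => ?_) hc
    exact mul_commutator_mem_commSpan hchar hls hrc ha hb (hI n a ha).1 (hJ n b hb).1
      (hI n a ha).2 (hJ n b hb).2
  · refine commSpan_le_comap (S := commSpan K I J) (LinearMap.mulRight K n)
      (fun a ha b hb => ?_) hc
    exact commutator_mul_mem_commSpan hchar hls hrc ha hb (hI n a ha).2 (hJ n b hb).2

end CommSpan

theorem stmt12 {K N : Type*} [Field K] [NonUnitalNonAssocRing N] [Module K N]
    [SMulCommClass K N N] [IsScalarTower K N N]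
    (hchar : (2 : K) ≠ 0)
    (hls : ∀ x y z : N, (x*y)*z - x*(y*z) = (y*x)*z - y*(x*z))
    (hrc : ∀ x y z : N, (x*y)*z = (x*z)*y)
    (I J : Submodule K N)
    (hI : ∀ n : N, ∀ a ∈ I, n * a ∈ I ∧ a * n ∈ I)
    (hJ : ∀ n : N, ∀ b ∈ J, n * b ∈ J ∧ b * n ∈ J) :
    (∀ c ∈ commSpan K I J, ∀ n : N, n * c ∈ commSpan K I J ∧ c * n ∈ commSpan K I J) ∧
    (∀ c ∈ commSpan K (⊤ : Submodule K N) ⊤, ∀ n : N,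
      n * c ∈ commSpan K (⊤ : Submodule K N) ⊤ ∧ c * n ∈ commSpan K (⊤ : Submodule K N) ⊤) := by
  have htop : ∀ n : N, ∀ a ∈ (⊤ : Submodule K N), n * a ∈ (⊤ : Submodule K N) ∧
      a * n ∈ (⊤ : Submodule K N) := fun _ _ _ => ⟨Submodule.mem_top, Submodule.mem_top⟩
  exact ⟨mul_mem_commSpan hchar hls hrc hI hJ, mul_mem_commSpan hchar hls hrc htop htop⟩
end

section
/- Any Lie-metabelian Novikov algebra over a field of characteristic not 2 satisfies the identity (x,[y,z],t)[a,b] = 0. -/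
/-!
Let `C` be the `K`-span of all commutators `[p, q] = p q - q p`. In a Novikov algebra
`2 [p, q] f = [p f, q] + [p, q f]`, so when `2` is invertible `C` is a two-sided ideal, and
Lie-metabelianity says exactly that `C` is commutative. For `u, c ∈ C`, right-commutativity gives
`(x, u, t) c = (x c, u, t)`, left-symmetry turns this into `(u, x c, t)`, and since `u` commutes
with the elements `x c` and `(x c) t` of `C`,
`(u, x c, t) = ((x c) u) t - ((x c) t) u`, which vanishes by right-commutativity.
-/

structure IsNovikov (N : Type*) [NonUnitalNonAssocRing N] : Prop where
  associator_left_symm : ∀ x y z : N, associator x y z = associator y x z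
  mul_right_comm : ∀ x y z : N, x * y * z = x * z * y

namespace IsNovikov

variable {N : Type*} [NonUnitalNonAssocRing N]

theorem associator_mul (hN : IsNovikov N) (x y z w : N) :
    associator x y z * w = associator (x * w) y z := by
  rw [associator_apply, associator_apply, sub_mul, hN.mul_right_comm (x * y),
    hN.mul_right_comm x y w, hN.mul_right_comm x (y * z) w]

theorem commutator_mul_add_self (hN : IsNovikov N) (p q f : N) :
    (p * q - q * p) * f + (p * q - q * p) * f =
      (p * f * q - q * (p * f)) + (p * (q * f) - q * f * p) := by
  have h := hN.associator_left_symm p q f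
  rw [associator_apply, associator_apply] at h
  rw [hN.mul_right_comm p f, hN.mul_right_comm q f, sub_mul]
  linear_combination (norm := abel) h

theorem associator_eq_zero_of_commute (hN : IsNovikov N) {u v : N} (t : N) (huv : Commute u v)
    (huvt : Commute u (v * t)) : associator u v t = 0 := by
  rw [associator_apply, huv.eq, huvt.eq, hN.mul_right_comm, sub_self]

end IsNovikov

section CommutatorSpan

variable (K N : Type*) [Field K] [NonUnitalNonAssocRing N] [Module K N]

def commutatorSpan : Submodule K N :=
  Submodule.span K {v | ∃ p q : N, p * q - q * p = v}

variable {K N}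

theorem commutator_mem_commutatorSpan (p q : N) : p * q - q * p ∈ commutatorSpan K N :=
  Submodule.subset_span ⟨p, q, rfl⟩

theorem commute_of_mem_commutatorSpan [SMulCommClass K N N] [IsScalarTower K N N]
    (hmet : ∀ x y z t : N, Commute (x * y - y * x) (z * t - t * z)) {v w : N}
    (hv : v ∈ commutatorSpan K N) (hw : w ∈ commutatorSpan K N) : Commute v w := by
  induction hv, hw using Submodule.span_induction₂ with
  | mem_mem _ _ hv hw =>
    obtain ⟨x, y, rfl⟩ := hv
    obtain ⟨z, t, rfl⟩ := hw
    exact hmet x y z t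
  | zero_left => exact Commute.zero_left _
  | zero_right => exact Commute.zero_right _
  | add_left _ _ _ _ _ _ h₁ h₂ => exact h₁.add_left h₂
  | add_right _ _ _ _ _ _ h₁ h₂ => exact h₁.add_right h₂
  | smul_left r _ _ _ _ h => exact h.smul_left r
  | smul_right r _ _ _ _ h => exact h.smul_right r

namespace IsNovikov

theorem mul_mem_commutatorSpan_right [IsScalarTower K N N] (hN : IsNovikov N) (h2 : (2 : K) ≠ 0)
    {v : N} (hv : v ∈ commutatorSpan K N) (f : N) : v * f ∈ commutatorSpan K N := by
  induction hv using Submodule.span_induction with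
  | mem _ hv =>
    obtain ⟨p, q, rfl⟩ := hv
    have hsum : (p * q - q * p) * f =
        (2 : K)⁻¹ • ((p * f * q - q * (p * f)) + (p * (q * f) - q * f * p)) := by
      rw [← hN.commutator_mul_add_self, ← two_smul K, smul_smul, inv_mul_cancel₀ h2, one_smul]
    rw [hsum]
    exact Submodule.smul_mem _ _
      (add_mem (commutator_mem_commutatorSpan _ _) (commutator_mem_commutatorSpan _ _))
  | zero => simp only [zero_mul, zero_mem]
  | add _ _ _ _ h₁ h₂ => simpa only [add_mul] using add_mem h₁ h₂
  | smul r _ _ h => simpa only [smul_mul_assoc] using Submodule.smul_mem _ r h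

theorem mul_mem_commutatorSpan_left [IsScalarTower K N N] (hN : IsNovikov N) (h2 : (2 : K) ≠ 0)
    {v : N} (hv : v ∈ commutatorSpan K N) (f : N) : f * v ∈ commutatorSpan K N := by
  rw [← sub_add_cancel (f * v) (v * f)]
  exact add_mem (commutator_mem_commutatorSpan f v) (hN.mul_mem_commutatorSpan_right h2 hv f)

end IsNovikov

end CommutatorSpan

theorem stmt14 {K N : Type*} [Field K] [NonUnitalNonAssocRing N] [Module K N]
    [SMulCommClass K N N] [IsScalarTower K N N]
    (hchar : (2 : K) ≠ 0)
    (hls : ∀ x y z : N, (x*y)*z - x*(y*z) = (y*x)*z - y*(x*z))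
    (hrc : ∀ x y z : N, (x*y)*z = (x*z)*y)
    (hmet : ∀ x y z t : N, (x*y - y*x)*(z*t - t*z) - (z*t - t*z)*(x*y - y*x) = 0)
    (x y z t a b : N) :
    ((x*(y*z - z*y))*t - x*((y*z - z*y)*t))*(a*b - b*a) = 0 := by
  have hN : IsNovikov N := ⟨hls, hrc⟩
  have hcomm : ∀ {v w : N}, v ∈ commutatorSpan K N → w ∈ commutatorSpan K N →
      Commute v w :=
    commute_of_mem_commutatorSpan fun x y z t ↦ sub_eq_zero.mp (hmet x y z t)
  have hu := commutator_mem_commutatorSpan (K := K) y z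
  have hxc := hN.mul_mem_commutatorSpan_left hchar (commutator_mem_commutatorSpan a b) x
  calc associator x (y*z - z*y) t * (a*b - b*a)
      = associator (y*z - z*y) (x * (a*b - b*a)) t := by
        rw [hN.associator_mul, hN.associator_left_symm]
    _ = 0 := hN.associator_eq_zero_of_commute t (hcomm hu hxc)
        (hcomm hu (hN.mul_mem_commutatorSpan_right hchar hxc t))
end
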